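/- (Hammersley–Clifford, factorization direction) Let p be a strictly positive probability distribution over finite discrete variables indexed by a finite set V, and let H be an undirected graph on V. If for every pair of non-adjacent vertices s, t of H we have X_s ⊥_p X_t | X_{V\{s,t\}}, then p factorizes as p(x) = Π_{K} ψ_K(x_K), where the product runs over the complete subsets K of H and each ψ_K is a strictly positive function depending only on the coordinates in K. -/

import Mathlib

/-!
Fix a reference configuration `z` and let
`φ_K(x) = ∑_{A ⊆ K} (-1)^{|K \ A|} log p(x_A, z_{V \ A})`. By Möbius inversion on the
subset lattice, `log p(x) = ∑_{K ⊆ V} φ_K(x)`, and `φ_K` only sees `x_K`. If `K` contains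
non-adjacent `s ≠ t`, pairwise conditional independence gives
`p(x_{A ∪ {s,t}}) p(x_A) = p(x_{A ∪ {s}}) p(x_{A ∪ {t}})` for every `A`, and the alternating
sum defining `φ_K` cancels in these quadruples, so `φ_K = 0`.
Hence `p = ∏_{K complete} exp φ_K`.
-/

open scoped Classical

/-- The marginal of a distribution `p` on the coordinates in `S`, evaluated at the
configuration `x` (i.e. the probability that the coordinates in `S` take the values
they take in `x`). -/
noncomputable def marginal {V : Type*} [Fintype V] {X : V → Type*} [∀ v, Fintype (X v)]
    (p : (∀ v, X v) → ℝ) (S : Finset V) (x : ∀ v, X v) : ℝ :=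
  ∑ y : ∀ v, X v, if ∀ v ∈ S, y v = x v then p y else 0

/-- Conditional independence `A ⊥_p B | S` of the sets of coordinates `A` and `B`
given `S`, expressed multiplicatively via marginals:
`p(a,b,s)·p(s) = p(a,s)·p(b,s)`. -/
def CondIndep {V : Type*} [Fintype V] {X : V → Type*} [∀ v, Fintype (X v)]
    (p : (∀ v, X v) → ℝ) (A B S : Finset V) : Prop :=
  ∀ x : ∀ v, X v,
    marginal p (A ∪ B ∪ S) x * marginal p S x
      = marginal p (A ∪ S) x * marginal p (B ∪ S) x

open Finset

section Moebius

variable {α M : Type*} [DecidableEq α] [AddCommGroup M]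

def moebiusTransform (g : Finset α → M) (K : Finset α) : M :=
  ∑ A ∈ K.powerset, (-1 : ℤ) ^ #(K \ A) • g A

@[simp]
lemma moebiusTransform_empty (g : Finset α → M) : moebiusTransform g ∅ = g ∅ := by
  simp [moebiusTransform]

lemma moebiusTransform_insert (g : Finset α → M) {a : α} {K : Finset α} (ha : a ∉ K) :
    moebiusTransform g (insert a K)
      = moebiusTransform (fun A => g (insert a A)) K - moebiusTransform g K := by
  have card_insert_sdiff : ∀ A ∈ K.powerset, #(insert a K \ A) = #(K \ A) + 1 := fun A hA => by
    rw [insert_sdiff_of_notMem _ fun haA => ha (mem_powerset.1 hA haA),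
      card_insert_of_notMem fun h => ha (mem_sdiff.1 h).1]
  have sdiff_eq : ∀ A ∈ K.powerset, insert a K \ insert a A = K \ A := fun A _ => by
    rw [insert_sdiff_insert, sdiff_insert_of_notMem ha]
  have sum_without_a : ∑ A ∈ K.powerset, (-1 : ℤ) ^ #(insert a K \ A) • g A
      = -moebiusTransform g K := by
    rw [moebiusTransform, ← sum_neg_distrib]
    refine sum_congr rfl fun A hA => ?_
    rw [card_insert_sdiff A hA, pow_succ, mul_neg_one, neg_smul]
  have sum_with_a : ∑ A ∈ K.powerset, (-1 : ℤ) ^ #(insert a K \ insert a A) • g (insert a A)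
      = moebiusTransform (fun A => g (insert a A)) K :=
    sum_congr rfl fun A hA => by rw [sdiff_eq A hA]
  rw [moebiusTransform, sum_powerset_insert ha, sum_without_a, sum_with_a, neg_add_eq_sub]

theorem sum_powerset_moebiusTransform (g : Finset α → M) (U : Finset α) :
    ∑ K ∈ U.powerset, moebiusTransform g K = g U := by
  induction U using Finset.induction_on generalizing g with
  | empty => simp
  | insert a U ha ih =>
    have hK : ∀ K ∈ U.powerset, a ∉ K := fun K hK h => ha (mem_powerset.1 hK h)
    rw [sum_powerset_insert ha, ← ih fun A => g (insert a A), ← sum_add_distrib]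
    refine sum_congr rfl fun K hK' => ?_
    rw [moebiusTransform_insert g (hK K hK')]
    abel

theorem moebiusTransform_eq_zero (g : Finset α → M) {s t : α} {K : Finset α} (hs : s ∈ K)
    (ht : t ∈ K) (hst : s ≠ t)
    (h : ∀ A, g (insert s (insert t A)) + g A = g (insert s A) + g (insert t A)) :
    moebiusTransform g K = 0 := by
  set L := (K.erase s).erase t
  have htL : t ∉ L := notMem_erase t _
  have hsL : s ∉ insert t L := by simp [L, hst]
  have hK : K = insert s (insert t L) := by
    rw [insert_erase (mem_erase.2 ⟨hst.symm, ht⟩), insert_erase hs]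
  rw [hK, moebiusTransform_insert _ hsL, moebiusTransform_insert _ htL,
    moebiusTransform_insert _ htL]
  simp only [moebiusTransform, ← sum_sub_distrib, ← smul_sub]
  refine sum_eq_zero fun A _ => ?_
  rw [sub_sub_sub_eq, sub_eq_zero.2 (h A), smul_zero]

end Moebius

section Markov

variable {V : Type*} [Fintype V] {X : V → Type*} [∀ v, Fintype (X v)]

lemma marginal_pos {p : (∀ v, X v) → ℝ} (hpos : ∀ x, 0 < p x) (S : Finset V)
    (x : ∀ v, X v) : 0 < marginal p S x :=
  sum_pos' (fun y _ => by split_ifs <;> simp [(hpos y).le])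
    ⟨x, mem_univ x, by simpa using hpos x⟩

lemma marginal_congr (p : (∀ v, X v) → ℝ) (S : Finset V) {x y : ∀ v, X v}
    (h : ∀ v ∈ S, x v = y v) : marginal p S x = marginal p S y :=
  sum_congr rfl fun z _ => if_congr (forall₂_congr fun v hv => by rw [h v hv]) rfl rfl

@[simp]
lemma marginal_univ (p : (∀ v, X v) → ℝ) (x : ∀ v, X v) : marginal p univ x = p x := by
  rw [marginal, sum_eq_single x
    (fun y _ hy => if_neg fun h => hy (funext fun v => h v (mem_univ v)))
    (fun h => absurd (mem_univ x) h), if_pos fun v _ => rfl]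

theorem CondIndep.mul_eq_mul_of_rectangle {p : (∀ v, X v) → ℝ} (hpos : ∀ x, 0 < p x)
    {s t : V} (hst : s ≠ t) (hci : CondIndep p {s} {t} (univ \ {s, t}))
    {a b c d : ∀ v, X v} (hab : ∀ v ≠ t, a v = b v) (hcd : ∀ v ≠ t, c v = d v)
    (hac : ∀ v ≠ s, a v = c v) (hbd : ∀ v ≠ s, b v = d v) :
    p a * p d = p b * p c := by
  set S := univ \ {s, t}
  have hunion : {s} ∪ {t} ∪ S = univ := by
    ext v; by_cases v = s <;> by_cases v = t <;> simp [S, *]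
  have key : ∀ x, p x * marginal p S x
      = marginal p ({s} ∪ S) x * marginal p ({t} ∪ S) x := fun x => by
    rw [← marginal_univ p x, ← hunion]
    exact hci x
  have off_t : ∀ {x y : ∀ v, X v}, (∀ v ≠ t, x v = y v) →
      marginal p ({s} ∪ S) x = marginal p ({s} ∪ S) y := fun h =>
    marginal_congr p _ fun v hv => h v (by rintro rfl; simp [S, hst.symm] at hv)
  have off_s : ∀ {x y : ∀ v, X v}, (∀ v ≠ s, x v = y v) →
      marginal p ({t} ∪ S) x = marginal p ({t} ∪ S) y := fun h =>
    marginal_congr p _ fun v hv => h v (by rintro rfl; simp [S, hst] at hv)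
  have off_st : ∀ {x y : ∀ v, X v}, (∀ v, v ≠ s → v ≠ t → x v = y v) →
      marginal p S x = marginal p S y := fun h =>
    marginal_congr p _ fun v hv =>
      h v (by rintro rfl; simp [S] at hv) (by rintro rfl; simp [S] at hv)
  have hSb : marginal p S b = marginal p S a := (off_st fun v _ hvt => hab v hvt).symm
  have hSc : marginal p S c = marginal p S a := (off_st fun v hvs _ => hac v hvs).symm
  have hSd : marginal p S d = marginal p S a :=
    (off_st fun v hvs hvt => (hac v hvs).trans (hcd v hvt)).symm
  have hm := (marginal_pos hpos S a).ne'
  -- Multiply the conditional independence identity at the four corners: the marginals cancel.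
  have corners : (p a * marginal p S a) * (p d * marginal p S d)
      = (p b * marginal p S b) * (p c * marginal p S c) := by
    rw [key a, key d, key b, key c, off_t hab, off_t hcd, off_s hac, off_s hbd]; ring
  rw [hSb, hSc, hSd] at corners
  exact mul_right_cancel₀ (mul_ne_zero hm hm) (by linear_combination corners)

end Markov

section CanonicalPotential

variable {V : Type*} {X : V → Type*}

/-- `A.piecewise x z` is the configuration `(x_A, z_{V \ A})`. -/
noncomputable def canonicalPotential (p : (∀ v, X v) → ℝ) (z : ∀ v, X v) (K : Finset V)
    (x : ∀ v, X v) : ℝ :=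
  moebiusTransform (fun A => Real.log (p (A.piecewise x z))) K

lemma canonicalPotential_congr (p : (∀ v, X v) → ℝ) (z : ∀ v, X v) {K : Finset V}
    {x y : ∀ v, X v} (h : ∀ v ∈ K, x v = y v) :
    canonicalPotential p z K x = canonicalPotential p z K y :=
  sum_congr rfl fun A hA => by
    dsimp only
    rw [A.piecewise_congr (fun v hv => h v (mem_powerset.1 hA hv)) fun _ _ => rfl]

lemma sum_canonicalPotential [Fintype V] (p : (∀ v, X v) → ℝ) (z x : ∀ v, X v) :
    ∑ K ∈ (univ : Finset V).powerset, canonicalPotential p z K x = Real.log (p x) := by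
  simp only [canonicalPotential]
  rw [sum_powerset_moebiusTransform, piecewise_univ]

theorem canonicalPotential_eq_zero [Fintype V] [∀ v, Fintype (X v)] {p : (∀ v, X v) → ℝ}
    (hpos : ∀ x, 0 < p x) {s t : V} (hst : s ≠ t) (hci : CondIndep p {s} {t} (univ \ {s, t}))
    (z x : ∀ v, X v)
    {K : Finset V} (hs : s ∈ K) (ht : t ∈ K) :
    canonicalPotential p z K x = 0 := by
  refine moebiusTransform_eq_zero _ hs ht hst fun A => ?_
  rw [← Real.log_mul (hpos _).ne' (hpos _).ne', ← Real.log_mul (hpos _).ne' (hpos _).ne']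
  congr 1
  refine hci.mul_eq_mul_of_rectangle hpos hst ?_ ?_ ?_ ?_ <;>
    intro v hv <;> simp [Finset.piecewise, hv]

end CanonicalPotential

theorem eq_prod_exp_canonicalPotential {V : Type*} [Fintype V] {X : V → Type*}
    [∀ v, Fintype (X v)] {p : (∀ v, X v) → ℝ} (hpos : ∀ x, 0 < p x) {H : SimpleGraph V}
    (hpairwise : ∀ s t : V, s ≠ t → ¬ H.Adj s t → CondIndep p {s} {t} (univ \ {s, t}))
    (z x : ∀ v, X v) :
    p x = ∏ K ∈ (univ : Finset V).powerset.filter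
        (fun K => ∀ s ∈ K, ∀ t ∈ K, s ≠ t → H.Adj s t),
      Real.exp (canonicalPotential p z K x) := by
  calc p x = Real.exp (∑ K ∈ (univ : Finset V).powerset, canonicalPotential p z K x) := by
        rw [sum_canonicalPotential, Real.exp_log (hpos x)]
    _ = ∏ K ∈ (univ : Finset V).powerset, Real.exp (canonicalPotential p z K x) :=
        Real.exp_sum _ _
    _ = _ := (prod_filter_of_ne fun K _ hK s hs t ht hst => ?_).symm
  by_contra hadj
  exact hK (by rw [canonicalPotential_eq_zero hpos hst (hpairwise s t hst hadj) z x hs ht,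
    Real.exp_zero])

theorem stmt6_general {V : Type*} [Fintype V] [DecidableEq V] {X : V → Type*}
    [∀ v, Fintype (X v)]
    (p : (∀ v, X v) → ℝ) (hpos : ∀ x, 0 < p x)
    (H : SimpleGraph V)
    (hpairwise : ∀ s t : V, s ≠ t → ¬ H.Adj s t →
      CondIndep p {s} {t} (Finset.univ \ {s, t})) :
    ∃ ψ : Finset V → ((∀ v, X v) → ℝ),
      (∀ K x, 0 < ψ K x) ∧
      (∀ K (x y : ∀ v, X v), (∀ v ∈ K, x v = y v) → ψ K x = ψ K y) ∧
      (∀ x, p x =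
        ∏ K ∈ (Finset.univ : Finset V).powerset.filter
            (fun K => ∀ s ∈ K, ∀ t ∈ K, s ≠ t → H.Adj s t),
          ψ K x) := by
  rcases isEmpty_or_nonempty (∀ v, X v) with _ | ⟨⟨z⟩⟩
  · exact ⟨fun _ _ => 1, fun _ _ => one_pos, fun _ _ _ _ => rfl, isEmptyElim⟩
  refine ⟨fun K x => Real.exp (canonicalPotential p z K x), fun _ _ => Real.exp_pos _,
    fun _ _ _ h => congrArg Real.exp (canonicalPotential_congr p z h), fun x => ?_⟩
  -- `convert` reconciles the `DecidableEq V` instance of the statement with the classical one.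
  convert eq_prod_exp_canonicalPotential hpos
    (fun s t hst hadj => by convert hpairwise s t hst hadj) z x

/-- Hammersley–Clifford, factorization direction: if a strictly
positive distribution `p` satisfies the pairwise Markov property wrt an undirected
graph `H` (every pair of non-adjacent vertices is conditionally independent given
all the rest), then `p(x) = Π_K ψ_K(x_K)`, the product running over the complete
subsets `K` of `H`, with each `ψ_K` strictly positive and depending only on the
coordinates in `K`. -/
theorem stmt6 {V : Type*} [Fintype V] [DecidableEq V] {X : V → Type*}
    [∀ v, Fintype (X v)]
    (p : (∀ v, X v) → ℝ) (hpos : ∀ x, 0 < p x) (hsum : ∑ x, p x = 1)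
    (H : SimpleGraph V)
    (hpairwise : ∀ s t : V, s ≠ t → ¬ H.Adj s t →
      CondIndep p {s} {t} (Finset.univ \ {s, t})) :
    ∃ ψ : Finset V → ((∀ v, X v) → ℝ),
      (∀ K x, 0 < ψ K x) ∧
      (∀ K (x y : ∀ v, X v), (∀ v ∈ K, x v = y v) → ψ K x = ψ K y) ∧
      (∀ x, p x =
        ∏ K ∈ (Finset.univ : Finset V).powerset.filter
            (fun K => ∀ s ∈ K, ∀ t ∈ K, s ≠ t → H.Adj s t),
          ψ K x) :=
  stmt6_general p hpos H hpairwise
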